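/- Let a : [0,∞) → ℝ be continuous, nonnegative, and satisfy a(t) ≤ A·exp(B·∫₀ᵗ ln(1 + a(τ)) dτ) for all t ≥ 0, with constants A ≥ 1 and B > 0. Then ln(1 + a(t)) ≤ ln(1 + A)·exp(B·t) for all t ≥ 0; in particular a(t) ≤ (1 + A)^{exp(Bt)} − 1, a double exponential bound in time. -/

import Mathlib

/-!
Taking logarithms linearises the hypothesis: since `1 + A e^y ≤ (1 + A) e^y` for `y ≥ 0`,
`φ = log (1 + a)` satisfies `φ t ≤ log (1 + A) + B ∫₀ᵗ φ`. The linear integral Grönwall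
inequality then gives `φ t ≤ log (1 + A) e^{Bt}`, and exponentiating gives the double
exponential bound on `a`.
-/

open MeasureTheory Set Real

theorem add_mul_gronwallBound_zero (K ε x : ℝ) :
    ε + K * gronwallBound 0 K ε x = ε * exp (K * x) := by
  rcases eq_or_ne K 0 with rfl | hK
  · simp [gronwallBound_K0]
  · rw [gronwallBound_of_K_ne_0 hK]
    field_simp
    ring

theorem le_mul_exp_of_le_add_mul_integral {u : ℝ → ℝ} {C K : ℝ}
    (hu : ContinuousOn u (Ici 0)) (hK : 0 ≤ K)
    (h : ∀ t ∈ Ici (0 : ℝ), u t ≤ C + K * ∫ τ in (0 : ℝ)..t, u τ) :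
    ∀ t ∈ Ici (0 : ℝ), u t ≤ C * exp (K * t) := by
  intro T (hT : 0 ≤ T)
  set F : ℝ → ℝ := fun t => ∫ τ in (0 : ℝ)..t, u τ
  have hint : ∀ t ∈ Ici (0 : ℝ), IntervalIntegrable u volume 0 t := fun t ht =>
    (hu.mono fun τ hτ => by rw [uIcc_of_le ht] at hτ; exact hτ.1).intervalIntegrable
  have hFcont : ContinuousOn F (Icc 0 T) := by
    rw [← uIcc_of_le hT]
    exact intervalIntegral.continuousOn_primitive_interval
      (uIcc_of_le hT ▸ (hu.mono Icc_subset_Ici_self).integrableOn_Icc)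
  have hFderiv : ∀ t ∈ Ico 0 T, HasDerivWithinAt F (u t) (Ici t) t := fun t ht =>
    have hut : ContinuousOn u (Ioi t) := hu.mono fun τ hτ => ht.1.trans hτ.le
    intervalIntegral.integral_hasDerivWithinAt_right (hint t ht.1)
      (hut.stronglyMeasurableAtFilter_nhdsWithin measurableSet_Ioi t)
      ((hu t ht.1).mono fun τ hτ => ht.1.trans hτ.le)
  -- `F' = u ≤ K F + C`, so `F` stays below the solution of the comparison ODE.
  have hFbound := le_gronwallBound_of_liminf_deriv_right_le (δ := 0) hFcont
    (fun t ht _ hr => (hFderiv t ht).liminf_right_slope_le hr) intervalIntegral.integral_same.le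
    (fun t ht => (h t ht.1).trans_eq (add_comm _ _)) T ⟨hT, le_rfl⟩
  calc u T ≤ C + K * F T := h T hT
    _ ≤ C + K * gronwallBound 0 K C T := by
        rw [sub_zero] at hFbound; gcongr
    _ = C * exp (K * T) := add_mul_gronwallBound_zero K C T

theorem log_one_add_le_log_one_add_add {x A y : ℝ} (hx : 0 ≤ x) (hy : 0 ≤ y)
    (h : x ≤ A * exp y) : log (1 + x) ≤ log (1 + A) + y := by
  have hmul : 1 + x ≤ (1 + A) * exp y := by linarith [one_le_exp hy]
  have hA : 0 < 1 + A := (mul_pos_iff_of_pos_right (exp_pos y)).1 (by linarith)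
  calc log (1 + x) ≤ log ((1 + A) * exp y) := log_le_log (by linarith) hmul
    _ = log (1 + A) + y := by rw [log_mul hA.ne' (exp_ne_zero y), log_exp]

/-- Log-Grönwall step (esp71): double-exponential bound in time. -/
theorem stmt_12 (A B : ℝ) (hA : 1 ≤ A) (hB : 0 < B) (a : ℝ → ℝ)
    (hacont : ContinuousOn a (Ici 0))
    (hann : ∀ t ∈ Ici (0:ℝ), 0 ≤ a t)
    (hineq : ∀ t ∈ Ici (0:ℝ),
      a t ≤ A * Real.exp (B * ∫ τ in (0:ℝ)..t, Real.log (1 + a τ))) :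
    (∀ t ∈ Ici (0:ℝ), Real.log (1 + a t) ≤ Real.log (1 + A) * Real.exp (B * t)) ∧
    (∀ t ∈ Ici (0:ℝ), a t ≤ (1 + A) ^ Real.exp (B * t) - 1) := by
  have hpos : ∀ t ∈ Ici (0 : ℝ), 0 < 1 + a t := fun t ht => by linarith [hann t ht]
  have hlog_cont : ContinuousOn (fun t => log (1 + a t)) (Ici 0) :=
    (continuousOn_const.add hacont).log fun t ht => (hpos t ht).ne'
  have hlog_nonneg : ∀ t ∈ Ici (0 : ℝ), 0 ≤ log (1 + a t) := fun t ht =>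
    log_nonneg (by linarith [hann t ht])
  have hlog_le : ∀ t ∈ Ici (0 : ℝ),
      log (1 + a t) ≤ log (1 + A) + B * ∫ τ in (0 : ℝ)..t, log (1 + a τ) := fun t ht =>
    log_one_add_le_log_one_add_add (hann t ht)
      (mul_nonneg hB.le (intervalIntegral.integral_nonneg ht fun τ hτ => hlog_nonneg τ hτ.1))
      (hineq t ht)
  have hlog_bound := le_mul_exp_of_le_add_mul_integral hlog_cont hB.le hlog_le
  refine ⟨hlog_bound, fun t ht => ?_⟩
  have : 1 + a t ≤ (1 + A) ^ exp (B * t) := by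
    rw [le_rpow_iff_log_le (hpos t ht) (by linarith), mul_comm]
    exact hlog_bound t ht
  linarith
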